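/- The set R of initial angles from which the rod first falls on the right is open: R := {φ ∈ (0, π) : there exists t > 0 with A φ t = 0 and A φ s ∈ (0, π) for all s ∈ [0, t)} is an open subset of ℝ. -/

import Mathlib

/-!
If the rod started at `φ₀` first reaches `0` at time `t₀`, then `α'(t₀) < 0`: since `α > 0` just
before `t₀` we have `α'(t₀) ≤ 0`, and `α'(t₀) = 0` is impossible because `α''(t₀) = -g < 0`.
Hence the solution is negative at some `t₁ > t₀` while staying below `π` on `[0, t₁]`.
By Grönwall's inequality the solutions depend continuously on the initial angle, uniformly on
`[0, t₁]`, so for `φ` near `φ₀` the solution is still below `π` on `[0, t₁]` and negative at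
`t₁`; its first zero is then a fall to the right.
-/

/-- `α` is a solution of the inverted-pendulum equation
`α'' t = -g * cos (α t) + u t * sin (α t)`. -/
def IsPendulumSolution (g : ℝ) (u : ℝ → ℝ) (α : ℝ → ℝ) : Prop :=
  ContDiff ℝ 2 α ∧
    ∀ t : ℝ, deriv (deriv α) t = -g * Real.cos (α t) + u t * Real.sin (α t)

open Real Set Filter Topology
open scoped NNReal

theorem HasDerivAt.nonpos_of_eventually_nhdsLT_lt {f : ℝ → ℝ} {f' x : ℝ} (h : HasDerivAt f f' x)
    (hf : ∀ᶠ y in 𝓝[<] x, f x < f y) : f' ≤ 0 := by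
  refine le_of_tendsto (hasDerivAt_iff_tendsto_slope_left_right.mp h).1 ?_
  filter_upwards [hf, self_mem_nhdsWithin] with y hy hyx
  rw [slope_def_field]
  exact div_nonpos_of_nonneg_of_nonpos (sub_nonneg.2 hy.le) (sub_nonpos.2 (le_of_lt hyx))

theorem HasDerivAt.eventually_nhdsLT_lt_of_neg {f : ℝ → ℝ} {f' x : ℝ} (h : HasDerivAt f f' x)
    (hf' : f' < 0) : ∀ᶠ y in 𝓝[<] x, f x < f y := by
  filter_upwards [(hasDerivAt_iff_tendsto_slope_left_right.mp h).1.eventually (gt_mem_nhds hf'),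
    self_mem_nhdsWithin] with y hy hyx
  rw [slope_def_field, div_neg_iff] at hy
  rcases hy with ⟨hf, -⟩ | ⟨-, hxy⟩
  · linarith
  · linarith [show y < x from hyx]

theorem HasDerivAt.eventually_nhdsGT_lt_of_neg {f : ℝ → ℝ} {f' x : ℝ} (h : HasDerivAt f f' x)
    (hf' : f' < 0) : ∀ᶠ y in 𝓝[>] x, f y < f x := by
  filter_upwards [(hasDerivAt_iff_tendsto_slope_left_right.mp h).2.eventually (gt_mem_nhds hf'),
    self_mem_nhdsWithin] with y hy hxy
  rw [slope_def_field, div_neg_iff] at hy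
  rcases hy with ⟨-, hyx⟩ | ⟨hf, -⟩
  · linarith [show x < y from hxy]
  · linarith

theorem HasDerivAt.exists_gt_lt_and_forall_Icc_lt {f : ℝ → ℝ} {f' x c : ℝ}
    (h : HasDerivAt f f' x) (hf' : f' < 0) (hc : f x < c) :
    ∃ y > x, f y < f x ∧ ∀ s ∈ Icc x y, f s < c := by
  obtain ⟨b, hb : x < b, hsub⟩ := mem_nhdsGE_iff_exists_Ico_subset.mp
    (h.continuousAt.continuousWithinAt.eventually_lt_const hc : ∀ᶠ s in 𝓝[≥] x, f s < c)
  obtain ⟨y, hy, hyb⟩ := ((h.eventually_nhdsGT_lt_of_neg hf').and (Ioo_mem_nhdsGT hb)).exists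
  exact ⟨y, hyb.1, hy, fun s hs => hsub ⟨hs.1, hs.2.trans_lt hyb.2⟩⟩

theorem eventually_nhdsLT_lt_of_deriv_pos {f : ℝ → ℝ} {x : ℝ} (hf : Continuous f)
    (hf' : ∀ᶠ y in 𝓝[<] x, 0 < deriv f y) : ∀ᶠ y in 𝓝[<] x, f y < f x := by
  obtain ⟨a, hax, hsub⟩ := mem_nhdsLT_iff_exists_Ioo_subset.mp hf'
  filter_upwards [Ioo_mem_nhdsLT hax] with y hy
  have hmono : StrictMonoOn f (Icc y x) :=
    strictMonoOn_of_deriv_pos (convex_Icc y x) hf.continuousOn fun z hz => by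
      rw [interior_Icc] at hz
      exact hsub ⟨hy.1.trans hz.1, hz.2⟩
  exact hmono (left_mem_Icc.2 hy.2.le) (right_mem_Icc.2 hy.2.le) hy.2

/-- If `f' x = 0`, then `f'' x < 0` makes `f' > 0` just before `x`, so `f < f x` there. -/
theorem deriv_neg_of_eventually_nhdsLT_lt {f : ℝ → ℝ} {x : ℝ} (hf : Differentiable ℝ f)
    (hf' : DifferentiableAt ℝ (deriv f) x) (hf'' : deriv (deriv f) x < 0)
    (hlt : ∀ᶠ y in 𝓝[<] x, f x < f y) : deriv f x < 0 := by
  refine ((hf x).hasDerivAt.nonpos_of_eventually_nhdsLT_lt hlt).lt_of_ne fun hzero => ?_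
  have hpos : ∀ᶠ y in 𝓝[<] x, 0 < deriv f y := by
    simpa [hzero] using hf'.hasDerivAt.eventually_nhdsLT_lt_of_neg hf''
  obtain ⟨y, hxy, hyx⟩ := (hlt.and (eventually_nhdsLT_lt_of_deriv_pos hf.continuous hpos)).exists
  exact hxy.not_gt hyx

theorem exists_first_zero_of_continuousOn {f : ℝ → ℝ} {a b : ℝ} (hab : a ≤ b)
    (hf : ContinuousOn f (Icc a b)) (ha : 0 < f a) (hb : f b ≤ 0) :
    ∃ τ ∈ Ioc a b, f τ = 0 ∧ ∀ s ∈ Ico a τ, 0 < f s := by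
  have hS : IsClosed (Icc a b ∩ f ⁻¹' Iic 0) :=
    hf.preimage_isClosed_of_isClosed isClosed_Icc isClosed_Iic
  obtain ⟨τ, ⟨hτ, hfτ⟩, hτmin⟩ :=
    (isCompact_Icc.of_isClosed_subset hS inter_subset_left).exists_isLeast
      ⟨b, right_mem_Icc.2 hab, hb⟩
  have hpos : ∀ s ∈ Ico a τ, 0 < f s := fun s hs =>
    lt_of_not_ge fun hfs => (hτmin ⟨⟨hs.1, hs.2.le.trans hτ.2⟩, hfs⟩).not_gt hs.2
  obtain ⟨c, hc, hfc⟩ := intermediate_value_Icc' hτ.1 (hf.mono (Icc_subset_Icc_right hτ.2))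
    ⟨hfτ, ha.le⟩
  have hcτ : c = τ := le_antisymm hc.2 (hτmin ⟨⟨hc.1, hc.2.trans hτ.2⟩, hfc.le⟩)
  have haτ : a ≠ τ := by rintro rfl; exact hfτ.not_gt ha
  exact ⟨τ, ⟨hτ.1.lt_of_ne haτ, hτ.2⟩, hcτ ▸ hfc, hpos⟩

noncomputable def pendulumField (g c : ℝ) (p : ℝ × ℝ) : ℝ × ℝ :=
  (p.2, -g * cos p.1 + c * sin p.1)

theorem lipschitzWith_pendulumField (g c : ℝ) :
    LipschitzWith (max 1 (‖g‖₊ + ‖c‖₊)) (pendulumField g c) := by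
  have hcos := (lipschitzWith_smul (-g)).comp
    (lipschitzWith_cos.comp (LipschitzWith.prod_fst (α := ℝ) (β := ℝ)))
  have hsin := (lipschitzWith_smul c).comp
    (lipschitzWith_sin.comp (LipschitzWith.prod_fst (α := ℝ) (β := ℝ)))
  have h := (LipschitzWith.prod_snd (α := ℝ) (β := ℝ)).prodMk (hcos.add hsin)
  unfold pendulumField
  simpa [Function.comp_def] using h

theorem IsPendulumSolution.hasDerivAt_phase {g : ℝ} {u α : ℝ → ℝ}
    (h : IsPendulumSolution g u α) (t : ℝ) :
    HasDerivAt (fun t => (α t, deriv α t)) (pendulumField g (u t) (α t, deriv α t)) t := by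
  have hα := (h.1.differentiable (by norm_num) t).hasDerivAt
  have hα' := (h.1.differentiable_deriv_two t).hasDerivAt
  rw [h.2 t] at hα'
  exact hα.prodMk hα'

/-- Grönwall's inequality for the phase curves `t ↦ (α t, α' t)`; the Lipschitz constant comes
from a bound of `|u|` on `[a, b]`. -/
theorem exists_dist_phase_le_mul_exp {g : ℝ} {u : ℝ → ℝ} (hu : Continuous u) (a b : ℝ) :
    ∃ K : ℝ≥0, ∀ α β : ℝ → ℝ, IsPendulumSolution g u α → IsPendulumSolution g u β →
      ∀ t ∈ Icc a b, dist (α t, deriv α t) (β t, deriv β t) ≤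
        dist (α a, deriv α a) (β a, deriv β a) * exp (K * (t - a)) := by
  obtain ⟨M, hM⟩ := isCompact_Icc.exists_bound_of_continuousOn hu.continuousOn (s := Icc a b)
  refine ⟨max 1 (‖g‖₊ + M.toNNReal), fun α β hα hβ => ?_⟩
  have hv : ∀ t ∈ Ico a b,
      LipschitzOnWith (max 1 (‖g‖₊ + M.toNNReal)) (pendulumField g (u t)) univ := by
    intro t ht
    refine ((lipschitzWith_pendulumField g (u t)).weaken ?_).lipschitzOnWith
    gcongr
    rw [← NNReal.coe_le_coe, coe_nnnorm]
    exact (hM t (Ico_subset_Icc_self ht)).trans (le_coe_toNNReal M)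
  exact dist_le_of_trajectories_ODE_of_mem hv
    (fun t _ => (hα.hasDerivAt_phase t).continuousAt.continuousWithinAt)
    (fun t _ => (hα.hasDerivAt_phase t).hasDerivWithinAt) (fun _ _ => mem_univ _)
    (fun t _ => (hβ.hasDerivAt_phase t).continuousAt.continuousWithinAt)
    (fun t _ => (hβ.hasDerivAt_phase t).hasDerivWithinAt) (fun _ _ => mem_univ _) le_rfl

theorem tendstoUniformlyOn_of_isPendulumSolution {g : ℝ} {u : ℝ → ℝ} (hu : Continuous u)
    {A : ℝ → ℝ → ℝ}
    (hA : ∀ φ : ℝ, IsPendulumSolution g u (A φ) ∧ A φ 0 = φ ∧ deriv (A φ) 0 = 0) (φ₀ b : ℝ) :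
    TendstoUniformlyOn A (A φ₀) (𝓝 φ₀) (Icc 0 b) := by
  obtain ⟨K, hK⟩ := exists_dist_phase_le_mul_exp (g := g) hu 0 b
  rw [Metric.tendstoUniformlyOn_iff]
  intro ε hε
  have hlim : Tendsto (fun ψ => dist φ₀ ψ * exp (K * b)) (𝓝 φ₀) (𝓝 0) := by
    have hcont : Continuous fun ψ => dist φ₀ ψ * exp (K * b) := by fun_prop
    simpa using hcont.tendsto φ₀
  filter_upwards [hlim.eventually (gt_mem_nhds hε)] with ψ hψ t ht
  have hphase := hK _ _ (hA φ₀).1 (hA ψ).1 t ht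
  simp only [(hA φ₀).2.1, (hA ψ).2.1, (hA φ₀).2.2, (hA ψ).2.2, Prod.dist_eq, dist_self,
    sub_zero, max_eq_left dist_nonneg] at hphase
  calc dist (A φ₀ t) (A ψ t) ≤ dist φ₀ ψ * exp (K * t) := (le_max_left _ _).trans hphase
    _ ≤ dist φ₀ ψ * exp (K * b) := by gcongr; exact ht.2
    _ < ε := hψ

/-- The set `R` of initial angles from which the rod first falls to the right
(reaches `0` having stayed strictly above the floor before) is open. -/
theorem pendulum_right_fall_set_isOpen (g : ℝ) (hg : 0 < g)
    (u : ℝ → ℝ) (hu : Continuous u) (A : ℝ → ℝ → ℝ)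
    (hA : ∀ φ : ℝ, IsPendulumSolution g u (A φ) ∧ A φ 0 = φ ∧ deriv (A φ) 0 = 0) :
    IsOpen {φ : ℝ | φ ∈ Set.Ioo (0 : ℝ) Real.pi ∧
      ∃ t > (0 : ℝ), A φ t = 0 ∧
        ∀ s ∈ Set.Ico (0 : ℝ) t, A φ s ∈ Set.Ioo (0 : ℝ) Real.pi} := by
  rw [isOpen_iff_mem_nhds]
  rintro φ₀ ⟨hφ₀, t₀, ht₀, hzero, habove⟩
  obtain ⟨⟨hsmooth, hode⟩, -, -⟩ := hA φ₀
  have hdiff : Differentiable ℝ (A φ₀) := hsmooth.differentiable (by norm_num)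
  have hderiv : deriv (A φ₀) t₀ < 0 := by
    refine deriv_neg_of_eventually_nhdsLT_lt hdiff (hsmooth.differentiable_deriv_two t₀)
      (by simpa [hode, hzero] using hg) ?_
    filter_upwards [Ioo_mem_nhdsLT ht₀] with s hs
    simpa [hzero] using (habove s ⟨hs.1.le, hs.2⟩).1
  obtain ⟨t₁, ht₁, hneg, hnear⟩ := (hdiff t₀).hasDerivAt.exists_gt_lt_and_forall_Icc_lt hderiv
    (by simpa [hzero] using Real.pi_pos : A φ₀ t₀ < π)
  rw [hzero] at hneg
  have ht₁mem : t₁ ∈ Icc 0 t₁ := ⟨by linarith, le_rfl⟩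
  have hbelow : ∀ s ∈ Icc 0 t₁, A φ₀ s < π := fun s hs =>
    (lt_or_ge s t₀).elim (fun hst => (habove s ⟨hs.1, hst⟩).2) fun hts => hnear s ⟨hts, hs.2⟩
  obtain ⟨s₀, hs₀, hmax⟩ :=
    isCompact_Icc.exists_isMaxOn (nonempty_Icc.2 ht₁mem.1) hdiff.continuous.continuousOn
  have hunif := tendstoUniformlyOn_of_isPendulumSolution hu hA φ₀ t₁
  filter_upwards [isOpen_Ioo.mem_nhds hφ₀,
    hunif.eventually_forall_lt (hbelow s₀ hs₀) fun s hs => hmax hs,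
    (hunif.tendsto_at ht₁mem).eventually_lt_const hneg] with ψ hψ hψπ hψneg
  obtain ⟨τ, hτ, hτzero, hτpos⟩ := exists_first_zero_of_continuousOn ht₁mem.1
    (hA ψ).1.1.continuous.continuousOn (by simpa [(hA ψ).2.1] using hψ.1) hψneg.le
  exact ⟨hψ, τ, hτ.1, hτzero, fun s hs => ⟨hτpos s hs, hψπ s ⟨hs.1, hs.2.le.trans hτ.2⟩⟩⟩
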